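/- arXiv:2501.13524 — 4 statements merged into one kernel-verified Lean document; each statement's English description precedes it below -/
import Mathlib

section
/- Let n ≥ 1, let Ω : ℂⁿ → ℂⁿ be any map, and let K ≥ 0 be a constant such that |⟨Ω(y), v⟩ − ⟨y, Ω(v)⟩| ≤ K·‖y‖·‖v‖ for all y, v ∈ ℂⁿ. Then for all x, y, u, v ∈ ℂⁿ one has |⟨x, v⟩ + ⟨y, u⟩| ≤ (2 + K)·(‖x − Ω(y)‖ + ‖y‖)·(‖u + Ω(v)‖ + ‖v‖). -/
/-!
Splitting `⟨x, v⟩ + ⟨y, u⟩` as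
`⟨x - Ω y, v⟩ + (⟨Ω y, v⟩ - ⟨y, Ω v⟩) + ⟨y, u + Ω v⟩`,
Cauchy–Schwarz bounds the outer terms and the hypothesis on `Ω` bounds the middle one; each of the
three resulting products is a term of the expansion of `(1 + K) (‖x - Ω y‖ + ‖y‖) (‖u + Ω v‖ + ‖v‖)`.
-/

open scoped InnerProductSpace

section DerivedDuality

variable {𝕜 E : Type*} [RCLike 𝕜] [NormedAddCommGroup E] [InnerProductSpace 𝕜 E]

theorem inner_add_inner_eq_inner_sub_add_sub_add_inner (x y u v a b : E) :
    ⟪x, v⟫_𝕜 + ⟪y, u⟫_𝕜 = ⟪x - a, v⟫_𝕜 + (⟪a, v⟫_𝕜 - ⟪y, b⟫_𝕜) + ⟪y, u + b⟫_𝕜 := by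
  rw [inner_sub_left, inner_add_right]
  ring

theorem norm_inner_add_inner_le (x y u v a b : E) :
    ‖⟪x, v⟫_𝕜 + ⟪y, u⟫_𝕜‖ ≤ ‖x - a‖ * ‖v‖ + ‖⟪a, v⟫_𝕜 - ⟪y, b⟫_𝕜‖ + ‖y‖ * ‖u + b‖ := by
  rw [inner_add_inner_eq_inner_sub_add_sub_add_inner x y u v a b]
  refine norm_add₃_le.trans ?_
  gcongr <;> exact norm_inner_le_norm _ _

theorem add_mul_add_le_one_add_mul {p q r s K : ℝ} (hp : 0 ≤ p) (hq : 0 ≤ q) (hr : 0 ≤ r)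
    (hs : 0 ≤ s) (hK : 0 ≤ K) :
    p * s + K * q * s + q * r ≤ (1 + K) * (p + q) * (r + s) := by
  have hKqs : 0 ≤ K * (p * r + p * s + q * r) := by positivity
  nlinarith [mul_nonneg hp hr, mul_nonneg hq hs]

theorem norm_inner_add_inner_le_of_norm_inner_sub_inner_le (Ω : E → E) {K : ℝ} (hK : 0 ≤ K)
    (hΩ : ∀ y v : E, ‖⟪Ω y, v⟫_𝕜 - ⟪y, Ω v⟫_𝕜‖ ≤ K * ‖y‖ * ‖v‖) (x y u v : E) :
    ‖⟪x, v⟫_𝕜 + ⟪y, u⟫_𝕜‖ ≤ (1 + K) * (‖x - Ω y‖ + ‖y‖) * (‖u + Ω v‖ + ‖v‖) := by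
  calc ‖⟪x, v⟫_𝕜 + ⟪y, u⟫_𝕜‖
      ≤ ‖x - Ω y‖ * ‖v‖ + ‖⟪Ω y, v⟫_𝕜 - ⟪y, Ω v⟫_𝕜‖ + ‖y‖ * ‖u + Ω v‖ :=
        norm_inner_add_inner_le x y u v (Ω y) (Ω v)
    _ ≤ ‖x - Ω y‖ * ‖v‖ + K * ‖y‖ * ‖v‖ + ‖y‖ * ‖u + Ω v‖ := by gcongr; exact hΩ y v
    _ ≤ (1 + K) * (‖x - Ω y‖ + ‖y‖) * (‖u + Ω v‖ + ‖v‖) :=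
        add_mul_add_le_one_add_mul (norm_nonneg _) (norm_nonneg _) (norm_nonneg _)
          (norm_nonneg _) hK

end DerivedDuality

theorem stmt0_general (n : ℕ)
    (Ω : EuclideanSpace ℂ (Fin n) → EuclideanSpace ℂ (Fin n))
    (K : ℝ) (hK : 0 ≤ K)
    (hΩ : ∀ y v : EuclideanSpace ℂ (Fin n),
      ‖(inner ℂ (Ω y) v : ℂ) - (inner ℂ y (Ω v) : ℂ)‖ ≤ K * ‖y‖ * ‖v‖) :
    ∀ x y u v : EuclideanSpace ℂ (Fin n),
      ‖(inner ℂ x v : ℂ) + (inner ℂ y u : ℂ)‖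
        ≤ (2 + K) * (‖x - Ω y‖ + ‖y‖) * (‖u + Ω v‖ + ‖v‖) := by
  intro x y u v
  refine (norm_inner_add_inner_le_of_norm_inner_sub_inner_le Ω hK hΩ x y u v).trans ?_
  gcongr
  linarith

/-- boundedness of the duality map between the derived spaces
`d_Ω` and `d_{−Ω}` on `ℂⁿ`. -/
theorem stmt0 (n : ℕ) (hn : 1 ≤ n)
    (Ω : EuclideanSpace ℂ (Fin n) → EuclideanSpace ℂ (Fin n))
    (K : ℝ) (hK : 0 ≤ K)
    (hΩ : ∀ y v : EuclideanSpace ℂ (Fin n),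
      ‖(inner ℂ (Ω y) v : ℂ) - (inner ℂ y (Ω v) : ℂ)‖ ≤ K * ‖y‖ * ‖v‖) :
    ∀ x y u v : EuclideanSpace ℂ (Fin n),
      ‖(inner ℂ x v : ℂ) + (inner ℂ y u : ℂ)‖
        ≤ (2 + K) * (‖x - Ω y‖ + ‖y‖) * (‖u + Ω v‖ + ‖v‖) :=
  stmt0_general n Ω K hK hΩ
end

section
/- Let n ≥ 1, let Ω : ℂⁿ → ℂⁿ be any map, and let K ≥ 0 be a constant such that |⟨Ω(y), v⟩ − ⟨y, Ω(v)⟩| ≤ K·‖y‖·‖v‖ for all y, v ∈ ℂⁿ. Then for all x, y ∈ ℂⁿ with y ≠ 0 there exist u, v ∈ ℂⁿ with ‖v‖ = 1 and ‖u + Ω(v)‖ ≤ K + 1 such that |⟨x, v⟩ + ⟨y, u⟩| ≥ ‖x − Ω(y)‖ + ‖y‖. -/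
/-!
Take `v` a unit vector norming `w = x - Ω y` and `u = -Ω v + ((K + 1) / ‖y‖) • y`, so that
`‖u + Ω v‖ = K + 1`. Then `⟨x, v⟩ + ⟨y, u⟩ = ‖w‖ + (⟨Ω y, v⟩ - ⟨y, Ω v⟩) + (K + 1) ‖y‖`, and the
commutator bound takes away at most `K ‖y‖` from the real part, leaving `‖w‖ + ‖y‖`.
-/

open scoped InnerProductSpace

variable {𝕜 E : Type*} [RCLike 𝕜] [NormedAddCommGroup E] [InnerProductSpace 𝕜 E]

theorem exists_norm_eq_one_inner_eq_norm [Nontrivial E] (w : E) :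
    ∃ v : E, ‖v‖ = 1 ∧ ⟪w, v⟫_𝕜 = ‖w‖ := by
  by_cases hw : w = 0
  · obtain ⟨z, hz⟩ := exists_ne (0 : E)
    exact ⟨(‖z‖⁻¹ : 𝕜) • z, norm_smul_inv_norm hz, by simp [hw]⟩
  · refine ⟨(‖w‖⁻¹ : 𝕜) • w, norm_smul_inv_norm hw, ?_⟩
    have hw' : (‖w‖ : 𝕜) ≠ 0 := by exact_mod_cast norm_ne_zero_iff.mpr hw
    rw [inner_smul_right, inner_self_eq_norm_sq_to_K]
    field_simp

theorem inner_add_inner_neg_add_smul_eq (x y v a b : E) (r : ℝ) :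
    ⟪x, v⟫_𝕜 + ⟪y, -b + (r : 𝕜) • y⟫_𝕜 =
      ⟪x - a, v⟫_𝕜 + (⟪a, v⟫_𝕜 - ⟪y, b⟫_𝕜) + ((r * ‖y‖ ^ 2 : ℝ) : 𝕜) := by
  rw [inner_sub_left, inner_add_right, inner_neg_right, inner_smul_right,
    inner_self_eq_norm_sq_to_K]
  push_cast
  ring

theorem add_le_norm_ofReal_add_add_ofReal {a b t : ℝ} {δ : 𝕜} (hδ : ‖δ‖ ≤ t) :
    a + b ≤ ‖(a : 𝕜) + δ + ((b + t : ℝ) : 𝕜)‖ := by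
  have hre : -‖δ‖ ≤ RCLike.re δ := (abs_le.mp (RCLike.abs_re_le_norm δ)).1
  calc a + b ≤ RCLike.re ((a : 𝕜) + δ + ((b + t : ℝ) : 𝕜)) := by
        simp only [map_add, RCLike.ofReal_re]; linarith
    _ ≤ _ := RCLike.re_le_norm _

theorem exists_norm_add_le_and_le_norm_inner_add_inner (Ω : E → E) {K : ℝ} (hK : 0 ≤ K)
    (hΩ : ∀ y v : E, ‖⟪Ω y, v⟫_𝕜 - ⟪y, Ω v⟫_𝕜‖ ≤ K * ‖y‖ * ‖v‖) (x : E) {y : E} (hy : y ≠ 0) :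
    ∃ u v : E, ‖v‖ = 1 ∧ ‖u + Ω v‖ ≤ K + 1 ∧ ‖x - Ω y‖ + ‖y‖ ≤ ‖⟪x, v⟫_𝕜 + ⟪y, u⟫_𝕜‖ := by
  have : Nontrivial E := ⟨⟨y, 0, hy⟩⟩
  have hy' : ‖y‖ ≠ 0 := norm_ne_zero_iff.mpr hy
  obtain ⟨v, hv, hwv⟩ := exists_norm_eq_one_inner_eq_norm (𝕜 := 𝕜) (x - Ω y)
  refine ⟨-Ω v + (((K + 1) / ‖y‖ : ℝ) : 𝕜) • y, v, hv, ?_, ?_⟩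
  · rw [neg_add_cancel_comm, norm_smul, RCLike.norm_ofReal, abs_of_nonneg (by positivity),
      div_mul_cancel₀ _ hy']
  · have hδ := hΩ y v
    rw [hv, mul_one] at hδ
    have hr : (K + 1) / ‖y‖ * ‖y‖ ^ 2 = ‖y‖ + K * ‖y‖ := by field_simp; ring
    rw [inner_add_inner_neg_add_smul_eq x y v (Ω y) (Ω v), hwv, hr]
    exact add_le_norm_ofReal_add_add_ofReal hδ

theorem stmt1_general (n : ℕ)
    (Ω : EuclideanSpace ℂ (Fin n) → EuclideanSpace ℂ (Fin n))
    (K : ℝ) (hK : 0 ≤ K)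
    (hΩ : ∀ y v : EuclideanSpace ℂ (Fin n),
      ‖(inner ℂ (Ω y) v : ℂ) - (inner ℂ y (Ω v) : ℂ)‖ ≤ K * ‖y‖ * ‖v‖) :
    ∀ x y : EuclideanSpace ℂ (Fin n), y ≠ 0 →
      ∃ u v : EuclideanSpace ℂ (Fin n), ‖v‖ = 1 ∧ ‖u + Ω v‖ ≤ K + 1 ∧
        ‖x - Ω y‖ + ‖y‖ ≤ ‖(inner ℂ x v : ℂ) + (inner ℂ y u : ℂ)‖ :=
  fun x _ hy => exists_norm_add_le_and_le_norm_inner_add_inner Ω hK hΩ x hy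

/-- lower estimate for the duality map between the derived spaces
`d_Ω` and `d_{−Ω}` on `ℂⁿ`. -/
theorem stmt1 (n : ℕ) (hn : 1 ≤ n)
    (Ω : EuclideanSpace ℂ (Fin n) → EuclideanSpace ℂ (Fin n))
    (K : ℝ) (hK : 0 ≤ K)
    (hΩ : ∀ y v : EuclideanSpace ℂ (Fin n),
      ‖(inner ℂ (Ω y) v : ℂ) - (inner ℂ y (Ω v) : ℂ)‖ ≤ K * ‖y‖ * ‖v‖) :
    ∀ x y : EuclideanSpace ℂ (Fin n), y ≠ 0 →
      ∃ u v : EuclideanSpace ℂ (Fin n), ‖v‖ = 1 ∧ ‖u + Ω v‖ ≤ K + 1 ∧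
        ‖x - Ω y‖ + ‖y‖ ≤ ‖(inner ℂ x v : ℂ) + (inner ℂ y u : ℂ)‖ :=
  stmt1_general n Ω K hK hΩ
end

section
/- Let Ω be a map from complex ℓ₂ to the space ω of all complex sequences such that supp Ω(x) ⊆ supp x for every x, and let C ≥ 0 be such that for every a ∈ ℓ_∞ and x ∈ ℓ₂ one has Ω(a·x) − a·Ω(x) ∈ ℓ₂ with ‖Ω(a·x) − a·Ω(x)‖₂ ≤ C·‖a‖_∞·‖x‖₂. Suppose K ≥ 0 is such that for every finitely supported y ∈ ℓ₂ the average, over all sign patterns ε : ℕ → {−1, 1}, of ‖Ω(ε·y)‖₂ + ‖y‖₂ is at most K·‖y‖₂ (the average being taken over the finitely many sign patterns on supp y, extended by 1 elsewhere). Then ‖Ω(y)‖₂ ≤ ((1 + C)·K − 1)·‖y‖₂ for every finitely supported y ∈ ℓ₂. -/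
/-- membership in complex `ℓ₂` for a sequence -/
def Meml2 (f : ℕ → ℂ) : Prop := Summable fun j => ‖f j‖ ^ 2

/-- the `ℓ₂` norm of a sequence -/
noncomputable def l2norm (f : ℕ → ℂ) : ℝ := Real.sqrt (∑' j, ‖f j‖ ^ 2)

/-!
For a sign pattern `ε`, unimodularity and the centralizer estimate give
`‖Ω y‖ = ‖ε·Ω y‖ ≤ ‖Ω (ε·y)‖ + ‖Ω (ε·y) - ε·Ω y‖ ≤ ‖Ω (ε·y)‖ + C‖y‖`.
Averaging over `ε` yields `‖Ω y‖ ≤ (K + C - 1)‖y‖`, and the same average shows `‖y‖ ≤ K‖y‖`,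
so `C‖y‖ ≤ CK‖y‖` and `K + C - 1` may be replaced by `(1 + C)K - 1`.
-/

lemma meml2_iff_memℓp {f : ℕ → ℂ} : Meml2 f ↔ Memℓp f 2 := by
  rw [memℓp_gen_iff (by norm_num)]
  norm_num [Meml2]

lemma Meml2.memℓp {f : ℕ → ℂ} (hf : Meml2 f) : Memℓp f 2 := meml2_iff_memℓp.mp hf

lemma meml2_of_finite_support {f : ℕ → ℂ} (hf : (Function.support f).Finite) : Meml2 f :=
  summable_of_hasFiniteSupport <| hf.subset fun j hj => by
    contrapose! hj
    simp_all

lemma l2norm_nonneg (f : ℕ → ℂ) : 0 ≤ l2norm f := Real.sqrt_nonneg _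

lemma l2norm_eq_norm_lp {f : ℕ → ℂ} (hf : Meml2 f) :
    l2norm f = ‖(⟨f, hf.memℓp⟩ : lp (fun _ : ℕ => ℂ) 2)‖ := by
  rw [lp.norm_eq_tsum_rpow (by norm_num), l2norm, Real.sqrt_eq_rpow]
  norm_num

lemma l2norm_of_not_meml2 {f : ℕ → ℂ} (hf : ¬ Meml2 f) : l2norm f = 0 := by
  rw [l2norm, tsum_eq_zero_of_not_summable hf, Real.sqrt_zero]

lemma l2norm_mul_of_norm_eq_one {a : ℕ → ℂ} (ha : ∀ j, ‖a j‖ = 1) (f : ℕ → ℂ) :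
    l2norm (fun j => a j * f j) = l2norm f := by
  simp only [l2norm, norm_mul, ha, one_mul]

/-- The triangle inequality for `l2norm`, valid also outside `ℓ₂` because of the junk value `0`. -/
lemma l2norm_le_add_of_meml2_sub {f g : ℕ → ℂ} (h : Meml2 (g - f)) :
    l2norm f ≤ l2norm g + l2norm (g - f) := by
  by_cases hf : Meml2 f
  · have hg : Meml2 g := meml2_iff_memℓp.mpr (by simpa using hf.memℓp.add h.memℓp)
    rw [l2norm_eq_norm_lp hf, l2norm_eq_norm_lp hg, l2norm_eq_norm_lp h]
    calc _ = ‖(⟨g, hg.memℓp⟩ : lp (fun _ : ℕ => ℂ) 2) - ⟨g - f, h.memℓp⟩‖ := by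
          congr 1; ext1; exact (sub_sub_cancel g f).symm
      _ ≤ _ := norm_sub_le _ _
  · rw [l2norm_of_not_meml2 hf]
    exact add_nonneg (l2norm_nonneg g) (l2norm_nonneg _)

def IsCentralizer (Ω : (ℕ → ℂ) → (ℕ → ℂ)) (C : ℝ) : Prop :=
  ∀ (a x : ℕ → ℂ) (A : ℝ), (∀ j, ‖a j‖ ≤ A) → Meml2 x →
    Meml2 (fun j => Ω (fun i => a i * x i) j - a j * Ω x j) ∧
    l2norm (fun j => Ω (fun i => a i * x i) j - a j * Ω x j) ≤ C * A * l2norm x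

lemma IsCentralizer.l2norm_apply_le_of_unimodular {Ω : (ℕ → ℂ) → (ℕ → ℂ)} {C : ℝ}
    (hΩ : IsCentralizer Ω C) {ε y : ℕ → ℂ} (hε : ∀ j, ‖ε j‖ = 1) (hy : Meml2 y) :
    l2norm (Ω y) ≤ l2norm (Ω (fun i => ε i * y i)) + C * l2norm y := by
  obtain ⟨hmem, hle⟩ := hΩ ε y 1 (fun j => (hε j).le) hy
  calc l2norm (Ω y) = l2norm (fun j => ε j * Ω y j) := (l2norm_mul_of_norm_eq_one hε _).symm
    _ ≤ l2norm (Ω (fun i => ε i * y i)) +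
          l2norm (fun j => Ω (fun i => ε i * y i) j - ε j * Ω y j) :=
        l2norm_le_add_of_meml2_sub hmem
    _ ≤ _ := by rw [mul_one] at hle; gcongr

lemma Finset.le_of_inv_card_mul_sum_le {ι : Type*} {t : Finset ι} (ht : t.Nonempty)
    {f : ι → ℝ} {c B : ℝ} (hB : (t.card : ℝ)⁻¹ * ∑ i ∈ t, f i ≤ B) (hc : ∀ i ∈ t, c ≤ f i) :
    c ≤ B := by
  refine le_trans ?_ hB
  rw [le_inv_mul_iff₀ (by exact_mod_cast ht.card_pos)]
  simpa using Finset.card_nsmul_le_sum t f c hc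

theorem stmt6_general (Ω : (ℕ → ℂ) → (ℕ → ℂ))
    (C : ℝ) (hC : 0 ≤ C)
    (hcent : ∀ (a x : ℕ → ℂ) (A : ℝ), (∀ j, ‖a j‖ ≤ A) → Meml2 x →
      Meml2 (fun j => Ω (fun i => a i * x i) j - a j * Ω x j) ∧
      l2norm (fun j => Ω (fun i => a i * x i) j - a j * Ω x j) ≤ C * A * l2norm x)
    (K : ℝ)
    (havg : ∀ (y : ℕ → ℂ) (hy : (Function.support y).Finite),
      ((2 : ℝ) ^ hy.toFinset.card)⁻¹ *
          ∑ T ∈ hy.toFinset.powerset,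
            (l2norm (Ω (fun i => (if i ∈ T then (-1 : ℂ) else 1) * y i)) + l2norm y)
        ≤ K * l2norm y) :
    ∀ (y : ℕ → ℂ), (Function.support y).Finite →
      l2norm (Ω y) ≤ ((1 + C) * K - 1) * l2norm y := by
  intro y hy
  have hΩ : IsCentralizer Ω C := hcent
  have hsign (T : Finset ℕ) (j : ℕ) : ‖(if j ∈ T then (-1 : ℂ) else 1)‖ = 1 := by
    split_ifs <;> simp
  have hmean := havg y hy
  rw [show (2 : ℝ) ^ hy.toFinset.card = (hy.toFinset.powerset.card : ℝ) by
    simp [Finset.card_powerset]] at hmean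
  have hK : l2norm y ≤ K * l2norm y :=
    Finset.le_of_inv_card_mul_sum_le (Finset.powerset_nonempty _) hmean
      fun T _ => le_add_of_nonneg_left (l2norm_nonneg _)
  have hΩy : l2norm (Ω y) + (1 - C) * l2norm y ≤ K * l2norm y :=
    Finset.le_of_inv_card_mul_sum_le (Finset.powerset_nonempty _) hmean fun T _ => by
      linarith [hΩ.l2norm_apply_le_of_unimodular (hsign T) (meml2_of_finite_support hy)]
  linarith [mul_le_mul_of_nonneg_left hK hC]

/-- a uniform Rademacher-average bound on the derived quasi-norm
forces a support-preserving centralizer to be bounded on finitely supported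
vectors. -/
theorem stmt6 (Ω : (ℕ → ℂ) → (ℕ → ℂ))
    (hsupp : ∀ x : ℕ → ℂ, Meml2 x → ∀ j, x j = 0 → Ω x j = 0)
    (C : ℝ) (hC : 0 ≤ C)
    (hcent : ∀ (a x : ℕ → ℂ) (A : ℝ), (∀ j, ‖a j‖ ≤ A) → Meml2 x →
      Meml2 (fun j => Ω (fun i => a i * x i) j - a j * Ω x j) ∧
      l2norm (fun j => Ω (fun i => a i * x i) j - a j * Ω x j) ≤ C * A * l2norm x)
    (K : ℝ) (hK : 0 ≤ K)
    (havg : ∀ (y : ℕ → ℂ) (hy : (Function.support y).Finite),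
      ((2 : ℝ) ^ hy.toFinset.card)⁻¹ *
          ∑ T ∈ hy.toFinset.powerset,
            (l2norm (Ω (fun i => (if i ∈ T then (-1 : ℂ) else 1) * y i)) + l2norm y)
        ≤ K * l2norm y) :
    ∀ (y : ℕ → ℂ), (Function.support y).Finite →
      l2norm (Ω y) ≤ ((1 + C) * K - 1) * l2norm y :=
  stmt6_general Ω C hC hcent K havg
end

section
/- There is a constant C ≥ 1 such that for every n ≥ 2 there exists an injective linear map S : ℂ^{n + ⌊log n⌋} → ℂⁿ × ℂⁿ with C⁻¹·‖w‖₂ ≤ q_n(S(w)) ≤ C·‖w‖₂ for all w ∈ ℂ^{n + ⌊log n⌋}, where q_n(x, y) = ‖x − 𝒦(y)‖₂ + ‖y‖₂ and 𝒦(y)_j = y_j·log(‖y‖₂/|y_j|) when y_j ≠ 0 and 0 otherwise. -/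
/-!
Let `m = ⌊log n⌋`, so that `2 ^ m ≤ n` and the Boolean cube `Fin m → Bool` embeds into `Fin n`.
The normalized Rademacher functions on this copy of the cube span an isometric copy `Y` of
`ℓ₂^m` inside `ℓ₂ⁿ`, and by Khintchine's inequality for fourth moments every `y` in it is flat:
`2^m ∑ |y_j|⁴ ≤ 3 ‖y‖⁴`. For a vector supported on `N` coordinates the inequality
`t² log² t ≤ 1 + t⁴` bounds `‖𝒦 y - log √N · y‖²` by `‖y‖² + N ∑ |y_j|⁴ / ‖y‖²`, so on `Y` the
Kalton–Peck map differs from multiplication by `log √(2^m)` by at most `2‖y‖`. Correcting the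
first coordinate by this linear part, `(x, b) ↦ (x + log √(2^m) · Y b, Y b)` is then a
4-isomorphic embedding of `ℓ₂^{n+m}` into `Z₂ⁿ`.
-/

/-- the Kalton–Peck map on `ℂⁿ`: `𝒦(y)_j = y_j · log(‖y‖₂/|y_j|)` (and `0` when `y_j = 0`). -/
noncomputable def KP (n : ℕ) (y : EuclideanSpace ℂ (Fin n)) : EuclideanSpace ℂ (Fin n) :=
  WithLp.toLp 2 (fun j => if y j = 0 then 0 else y j * (Real.log (‖y‖ / ‖y j‖) : ℂ))

/-- the Kalton–Peck quasi-norm on `ℂⁿ × ℂⁿ` (the space `Z₂ⁿ`). -/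
noncomputable def qKP (n : ℕ)
    (z : EuclideanSpace ℂ (Fin n) × EuclideanSpace ℂ (Fin n)) : ℝ :=
  ‖z.1 - KP n z.2‖ + ‖z.2‖

open Finset Real

section Rademacher

variable {E : Type*}

def rademacherSum [AddCommGroup E] {m : ℕ} (b : Fin m → E) (s : Fin m → Bool) : E :=
  ∑ k, if s k then -b k else b k

lemma sum_cube_succ {M : Type*} [AddCommMonoid M] {m : ℕ} (F : (Fin (m + 1) → Bool) → M) :
    ∑ s, F s = ∑ s : Fin m → Bool, (F (Fin.cons true s) + F (Fin.cons false s)) := by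
  rw [← (Fin.consEquiv fun _ => Bool).sum_comp, Fintype.sum_prod_type, Fintype.sum_bool,
    ← sum_add_distrib]
  rfl

lemma rademacherSum_cons [AddCommGroup E] {m : ℕ} (b : Fin (m + 1) → E) (t : Bool)
    (s : Fin m → Bool) :
    rademacherSum b (Fin.cons t s) =
      rademacherSum (Fin.tail b) s + if t then -b 0 else b 0 := by
  simp [rademacherSum, Fin.sum_univ_succ, add_comm, Fin.tail]

lemma rademacherSum_add [AddCommGroup E] {m : ℕ} (b b' : Fin m → E) :
    rademacherSum (b + b') = rademacherSum b + rademacherSum b' := by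
  ext s
  simp only [rademacherSum, Pi.add_apply, ← sum_add_distrib, neg_add]
  exact sum_congr rfl fun k _ => by split_ifs <;> rfl

lemma rademacherSum_smul {R : Type*} [Ring R] [AddCommGroup E] [Module R E] {m : ℕ} (a : R)
    (b : Fin m → E) : rademacherSum (a • b) = a • rademacherSum b := by
  ext s
  simp only [rademacherSum, Pi.smul_apply, smul_sum, smul_ite, smul_neg]

variable [NormedAddCommGroup E] [InnerProductSpace ℝ E]

lemma sum_norm_sq_rademacherSum {m : ℕ} (b : Fin m → E) :
    ∑ s, ‖rademacherSum b s‖ ^ 2 = 2 ^ m * ∑ k, ‖b k‖ ^ 2 := by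
  induction m with
  | zero => simp [rademacherSum]
  | succ m ih =>
    have parallelogram (x y : E) : ‖x + -y‖ ^ 2 + ‖x + y‖ ^ 2 = 2 * ‖x‖ ^ 2 + 2 * ‖y‖ ^ 2 := by
      rw [← sub_eq_add_neg, norm_add_sq_real, norm_sub_sq_real]; ring
    simp only [sum_cube_succ, rademacherSum_cons, if_true, Bool.false_eq_true, if_false,
      parallelogram, sum_add_distrib, ← mul_sum, ih, sum_const, card_univ, Fintype.card_fun,
      Fintype.card_bool, Fintype.card_fin, nsmul_eq_mul, Fin.sum_univ_succ (n := m)]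
    push_cast
    simp only [Fin.tail]
    ring

lemma norm_add_pow_four_add_norm_sub_pow_four_le (x y : E) :
    ‖x + y‖ ^ 4 + ‖x - y‖ ^ 4 ≤ 2 * (‖x‖ ^ 2 + ‖y‖ ^ 2) ^ 2 + 8 * ‖x‖ ^ 2 * ‖y‖ ^ 2 := by
  have hinner : inner ℝ x y ^ 2 ≤ ‖x‖ ^ 2 * ‖y‖ ^ 2 := by
    rw [← mul_pow, sq_le_sq, abs_mul, abs_norm, abs_norm]
    exact abs_real_inner_le_norm x y
  have h4 (z : E) : ‖z‖ ^ 4 = (‖z‖ ^ 2) ^ 2 := by ring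
  rw [h4, h4, norm_add_sq_real, norm_sub_sq_real]
  nlinarith

lemma sum_norm_pow_four_rademacherSum_le {m : ℕ} (b : Fin m → E) :
    ∑ s, ‖rademacherSum b s‖ ^ 4 ≤ 3 * 2 ^ m * (∑ k, ‖b k‖ ^ 2) ^ 2 := by
  induction m with
  | zero => simp [rademacherSum]
  | succ m ih =>
    have step (x y : E) : ‖x + -y‖ ^ 4 + ‖x + y‖ ^ 4 ≤
        2 * ‖x‖ ^ 4 + 12 * ‖y‖ ^ 2 * ‖x‖ ^ 2 + 2 * ‖y‖ ^ 4 := by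
      have := norm_add_pow_four_add_norm_sub_pow_four_le x y
      rw [← sub_eq_add_neg]; nlinarith
    set B := ∑ k, ‖Fin.tail b k‖ ^ 2
    have hcube : (#(univ : Finset (Fin m → Bool)) : ℝ) = 2 ^ m := by simp
    simp only [sum_cube_succ, rademacherSum_cons, if_true, Bool.false_eq_true, if_false]
    calc _ ≤ ∑ s, (2 * ‖rademacherSum (Fin.tail b) s‖ ^ 4
              + 12 * ‖b 0‖ ^ 2 * ‖rademacherSum (Fin.tail b) s‖ ^ 2 + 2 * ‖b 0‖ ^ 4) :=
          sum_le_sum fun s _ => step _ _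
      _ = 2 * ∑ s, ‖rademacherSum (Fin.tail b) s‖ ^ 4
            + 12 * ‖b 0‖ ^ 2 * (2 ^ m * B) + 2 * 2 ^ m * ‖b 0‖ ^ 4 := by
          simp only [sum_add_distrib, ← mul_sum, sum_norm_sq_rademacherSum, sum_const,
            nsmul_eq_mul, hcube]
          ring
      _ ≤ 2 * (3 * 2 ^ m * B ^ 2) + 12 * ‖b 0‖ ^ 2 * (2 ^ m * B) + 2 * 2 ^ m * ‖b 0‖ ^ 4 := by
          gcongr; exact ih _
      _ ≤ 3 * 2 ^ (m + 1) * (‖b 0‖ ^ 2 + B) ^ 2 := by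
          have : 0 ≤ 2 ^ m * ‖b 0‖ ^ 4 := by positivity
          linear_combination 4 * this
      _ = _ := by rw [Fin.sum_univ_succ]; rfl

end Rademacher

lemma sq_mul_log_le (t : ℝ) : (t * log t) ^ 2 ≤ 1 + t ^ 4 := by
  wlog ht : 0 ≤ t generalizing t
  · have h := this |t| (abs_nonneg t)
    rwa [log_abs, mul_pow, sq_abs, ← mul_pow, (by decide : Even 4).pow_abs] at h
  rcases le_or_gt t 1 with h1 | h1
  · rcases ht.eq_or_lt with rfl | ht
    · simp
    have := abs_log_mul_self_lt t ht h1
    rw [mul_comm, ← sq_abs]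
    nlinarith [abs_nonneg (log t * t), pow_nonneg ht.le 4]
  · have h0 : 0 ≤ log t := log_nonneg h1.le
    have hlog : log t ≤ t := (log_le_sub_one_of_pos (by linarith)).trans (by linarith)
    calc (t * log t) ^ 2 ≤ (t * t) ^ 2 := by gcongr
      _ ≤ 1 + t ^ 4 := by nlinarith

lemma sq_mul_log_div_le (a c : ℝ) : (a * log (c / a)) ^ 2 ≤ c ^ 2 + a ^ 4 / c ^ 2 := by
  rcases eq_or_ne c 0 with rfl | hc
  · simp
  have key : a * log (c / a) = -(c * ((a / c) * log (a / c))) := by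
    rw [← inv_div, log_inv]; field_simp
  calc (a * log (c / a)) ^ 2 = c ^ 2 * ((a / c) * log (a / c)) ^ 2 := by rw [key]; ring
    _ ≤ c ^ 2 * (1 + (a / c) ^ 4) := by gcongr; exact sq_mul_log_le _
    _ = c ^ 2 + a ^ 4 / c ^ 2 := by field_simp

lemma qKP_zero (n : ℕ) : qKP n 0 = 0 := by
  have : KP n 0 = 0 := by ext; simp [KP]
  simp [qKP, this]

lemma norm_sq_KP_sub_apply_le {n : ℕ} (y : EuclideanSpace ℂ (Fin n)) {N : ℝ} (hN : 0 < N)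
    (j : Fin n) :
    ‖(KP n y - (log √N : ℂ) • y) j‖ ^ 2 ≤
      (if y j = 0 then 0 else ‖y‖ ^ 2 / N) + N * ‖y j‖ ^ 4 / ‖y‖ ^ 2 := by
  by_cases hj : y j = 0
  · simp [KP, hj]
  have hy : y ≠ 0 := fun h => hj (by simp [h])
  have hyj : ‖y j‖ ≠ 0 := norm_ne_zero_iff.mpr hj
  have hy' : ‖y‖ ≠ 0 := norm_ne_zero_iff.mpr hy
  have hcoord : (KP n y - (log √N : ℂ) • y) j = y j * (log (‖y‖ / √N / ‖y j‖) : ℂ) := by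
    have : log (‖y‖ / ‖y j‖) - log √N = log (‖y‖ / √N / ‖y j‖) := by
      have hsqrt : √N ≠ 0 := (sqrt_pos.mpr hN).ne'
      rw [log_div (div_ne_zero hy' hsqrt) hyj, log_div hy' hsqrt, log_div hy' hyj]
      ring
    simp only [PiLp.sub_apply, PiLp.smul_apply, KP, hj, if_false, smul_eq_mul]
    rw [← this]; push_cast; ring
  rw [hcoord, norm_mul, Complex.norm_real, Real.norm_eq_abs, mul_pow, sq_abs, ← mul_pow, if_neg hj]
  calc _ ≤ (‖y‖ / √N) ^ 2 + ‖y j‖ ^ 4 / (‖y‖ / √N) ^ 2 := sq_mul_log_div_le _ _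
    _ = _ := by rw [div_pow, sq_sqrt hN.le]; field_simp

lemma norm_sq_KP_sub_le {n : ℕ} (y : EuclideanSpace ℂ (Fin n)) {N : ℝ} (hN : 0 < N)
    (hsupp : (#{j | y j ≠ 0} : ℝ) ≤ N) :
    ‖KP n y - (log √N : ℂ) • y‖ ^ 2 ≤ ‖y‖ ^ 2 + N * (∑ j, ‖y j‖ ^ 4) / ‖y‖ ^ 2 := by
  calc ‖KP n y - (log √N : ℂ) • y‖ ^ 2
      ≤ ∑ j, ((if y j = 0 then 0 else ‖y‖ ^ 2 / N) + N * ‖y j‖ ^ 4 / ‖y‖ ^ 2) := by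
        rw [EuclideanSpace.norm_sq_eq]
        exact sum_le_sum fun j _ => norm_sq_KP_sub_apply_le y hN j
    _ = #{j | y j ≠ 0} * (‖y‖ ^ 2 / N) + N * (∑ j, ‖y j‖ ^ 4) / ‖y‖ ^ 2 := by
        rw [sum_add_distrib, ← sum_div, ← mul_sum, sum_ite, sum_const_zero, zero_add, sum_const,
          nsmul_eq_mul]
    _ ≤ N * (‖y‖ ^ 2 / N) + N * (∑ j, ‖y j‖ ^ 4) / ‖y‖ ^ 2 := by gcongr
    _ = _ := by field_simp

section Walsh

variable {n m : ℕ} (ι : (Fin m → Bool) ↪ Fin n)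

noncomputable def walsh : EuclideanSpace ℂ (Fin m) →ₗ[ℂ] EuclideanSpace ℂ (Fin n) where
  toFun b := WithLp.toLp 2 <|
    Function.ExtendByZero.linearMap ℂ ι ((√(2 ^ m) : ℂ)⁻¹ • rademacherSum b.ofLp)
  map_add' b b' := by
    simp only [WithLp.ofLp_add, rademacherSum_add, smul_add, map_add, WithLp.toLp_add]
  map_smul' a b := by
    simp only [WithLp.ofLp_smul, rademacherSum_smul, smul_comm _ a, map_smul, WithLp.toLp_smul,
      RingHom.id_apply]

lemma sum_walsh_apply (g : ℂ → ℝ) (hg : g 0 = 0) (b : EuclideanSpace ℂ (Fin m)) :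
    ∑ j, g (walsh ι b j) = ∑ s, g ((√(2 ^ m) : ℂ)⁻¹ * rademacherSum b.ofLp s) := by
  refine (Fintype.sum_of_injective ι ι.injective _ _ (fun j hj => ?_) fun s => ?_).symm
  · simp [walsh, Function.extend_apply' _ _ _ hj, hg]
  · simp [walsh, ι.injective.extend_apply]

lemma norm_walsh (b : EuclideanSpace ℂ (Fin m)) : ‖walsh ι b‖ = ‖b‖ := by
  rw [← sq_eq_sq₀ (norm_nonneg _) (norm_nonneg _), EuclideanSpace.norm_sq_eq,
    EuclideanSpace.norm_sq_eq, sum_walsh_apply ι (‖·‖ ^ 2) (by simp)]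
  simp only [norm_mul, norm_inv, Complex.norm_real, norm_eq_abs, mul_pow, ← mul_sum,
    sum_norm_sq_rademacherSum, inv_pow, sq_abs, sq_sqrt (pow_nonneg zero_le_two m)]
  field_simp

lemma card_support_walsh_le (b : EuclideanSpace ℂ (Fin m)) :
    #{j | walsh ι b j ≠ 0} ≤ 2 ^ m := by
  calc #{j | walsh ι b j ≠ 0} ≤ #(univ.map ι) := card_le_card fun j hj => by
        by_contra h
        simp_all [walsh, Function.extend_apply']
    _ = 2 ^ m := by simp

lemma sum_norm_pow_four_walsh_le (b : EuclideanSpace ℂ (Fin m)) :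
    2 ^ m * ∑ j, ‖walsh ι b j‖ ^ 4 ≤ 3 * ‖b‖ ^ 4 := by
  have hpow : (√(2 ^ m))⁻¹ ^ 4 = ((2 : ℝ) ^ m)⁻¹ ^ 2 := by
    rw [show 4 = 2 * 2 from rfl, pow_mul, inv_pow, sq_sqrt (by positivity)]
  rw [sum_walsh_apply ι (‖·‖ ^ 4) (by simp)]
  simp only [norm_mul, norm_inv, Complex.norm_real, norm_eq_abs, mul_pow, ← mul_sum,
    abs_of_nonneg (sqrt_nonneg _), hpow]
  calc _ ≤ 2 ^ m * (((2 : ℝ) ^ m)⁻¹ ^ 2 * (3 * 2 ^ m * (∑ k, ‖b k‖ ^ 2) ^ 2)) := by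
        gcongr; exact sum_norm_pow_four_rademacherSum_le _
    _ = 3 * ‖b‖ ^ 4 := by
        rw [show 4 = 2 * 2 from rfl, pow_mul, EuclideanSpace.norm_sq_eq]; field_simp

lemma norm_KP_walsh_sub_le (b : EuclideanSpace ℂ (Fin m)) :
    ‖KP n (walsh ι b) - (log √(2 ^ m) : ℂ) • walsh ι b‖ ≤ 2 * ‖b‖ := by
  have hsupp : (#{j | walsh ι b j ≠ 0} : ℝ) ≤ 2 ^ m := by
    exact_mod_cast card_support_walsh_le ι b
  have hflat : 2 ^ m * (∑ j, ‖walsh ι b j‖ ^ 4) / ‖b‖ ^ 2 ≤ 3 * ‖b‖ ^ 2 := by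
    rcases eq_or_ne ‖b‖ 0 with hb | hb
    · simp [hb]
    rw [div_le_iff₀ (by positivity)]
    linarith [sum_norm_pow_four_walsh_le ι b]
  refine (pow_le_pow_iff_left₀ (norm_nonneg _) (by positivity) two_ne_zero).mp ?_
  calc _ ≤ ‖walsh ι b‖ ^ 2 + 2 ^ m * (∑ j, ‖walsh ι b j‖ ^ 4) / ‖walsh ι b‖ ^ 2 :=
        norm_sq_KP_sub_le _ (by positivity) hsupp
    _ ≤ (2 * ‖b‖) ^ 2 := by rw [norm_walsh]; linarith

end Walsh

lemma norm_sub_add_bounds {F : Type*} [SeminormedAddCommGroup F] (x z : F) {r : ℝ}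
    (hr : 0 ≤ r) (hz : ‖z‖ ≤ 2 * r) :
    4⁻¹ * √(‖x‖ ^ 2 + r ^ 2) ≤ ‖x - z‖ + r ∧ ‖x - z‖ + r ≤ 4 * √(‖x‖ ^ 2 + r ^ 2) := by
  have hx : ‖x‖ ≤ √(‖x‖ ^ 2 + r ^ 2) := le_sqrt_of_sq_le (by nlinarith)
  have hr' : r ≤ √(‖x‖ ^ 2 + r ^ 2) := le_sqrt_of_sq_le (by nlinarith)
  have hsum : √(‖x‖ ^ 2 + r ^ 2) ≤ ‖x‖ + r :=
    sqrt_le_iff.mpr ⟨by positivity, by nlinarith [norm_nonneg x]⟩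
  constructor <;> linarith [norm_nonneg (x - z), norm_sub_le x z, norm_le_norm_sub_add x z]

lemma norm_sq_finAddEquivProd {𝕜 : Type*} [RCLike 𝕜] {n m : ℕ}
    (w : EuclideanSpace 𝕜 (Fin (n + m))) :
    ‖w‖ ^ 2 = ‖(EuclideanSpace.finAddEquivProd w).1‖ ^ 2 +
      ‖(EuclideanSpace.finAddEquivProd w).2‖ ^ 2 := by
  simp [EuclideanSpace.norm_sq_eq, Fin.sum_univ_add]

lemma two_pow_floor_log_le {x : ℝ} (hx : 1 ≤ x) : (2 : ℝ) ^ ⌊log x⌋₊ ≤ x := by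
  have hk : (⌊log x⌋₊ : ℝ) ≤ log x := Nat.floor_le (log_nonneg hx)
  calc (2 : ℝ) ^ ⌊log x⌋₊ ≤ exp 1 ^ ⌊log x⌋₊ := by
        gcongr; linarith [add_one_le_exp (1 : ℝ)]
    _ = exp ⌊log x⌋₊ := by rw [← exp_nat_mul, mul_one]
    _ ≤ x := (exp_le_exp.mpr hk).trans (exp_log (by linarith)).le

noncomputable def walshEmbedding {n m : ℕ} (ι : (Fin m → Bool) ↪ Fin n) :
    EuclideanSpace ℂ (Fin (n + m)) →ₗ[ℂ] EuclideanSpace ℂ (Fin n) × EuclideanSpace ℂ (Fin n) :=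
  ((LinearMap.fst ℂ _ _ + (log √(2 ^ m) : ℂ) • walsh ι ∘ₗ LinearMap.snd ℂ _ _).prod
    (walsh ι ∘ₗ LinearMap.snd ℂ _ _)) ∘ₗ EuclideanSpace.finAddEquivProd.toLinearMap

lemma walshEmbedding_apply {n m : ℕ} (ι : (Fin m → Bool) ↪ Fin n)
    (w : EuclideanSpace ℂ (Fin (n + m))) :
    walshEmbedding ι w =
      ((EuclideanSpace.finAddEquivProd w).1 +
          (log √(2 ^ m) : ℂ) • walsh ι (EuclideanSpace.finAddEquivProd w).2,
        walsh ι (EuclideanSpace.finAddEquivProd w).2) :=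
  rfl

lemma qKP_walshEmbedding {n m : ℕ} (ι : (Fin m → Bool) ↪ Fin n)
    (w : EuclideanSpace ℂ (Fin (n + m))) :
    qKP n (walshEmbedding ι w) =
      ‖(EuclideanSpace.finAddEquivProd w).1 -
        (KP n (walsh ι (EuclideanSpace.finAddEquivProd w).2) -
          (log √(2 ^ m) : ℂ) • walsh ι (EuclideanSpace.finAddEquivProd w).2)‖ +
      ‖(EuclideanSpace.finAddEquivProd w).2‖ := by
  rw [qKP, walshEmbedding_apply, norm_walsh, sub_sub_eq_add_sub]

lemma walshEmbedding_bounds {n m : ℕ} (ι : (Fin m → Bool) ↪ Fin n)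
    (w : EuclideanSpace ℂ (Fin (n + m))) :
    4⁻¹ * ‖w‖ ≤ qKP n (walshEmbedding ι w) ∧ qKP n (walshEmbedding ι w) ≤ 4 * ‖w‖ := by
  rw [qKP_walshEmbedding, ← sqrt_sq (norm_nonneg w), norm_sq_finAddEquivProd]
  exact norm_sub_add_bounds _ _ (norm_nonneg _) (norm_KP_walsh_sub_le ι _)

/-- there is `C ≥ 1` such that `Z₂ⁿ` contains a `C`-isomorphic copy of
`ℓ₂^{n + ⌊log n⌋}` for every `n ≥ 2`. -/
theorem stmt11 : ∃ C : ℝ, 1 ≤ C ∧ ∀ n : ℕ, 2 ≤ n →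
    ∃ S : EuclideanSpace ℂ (Fin (n + ⌊Real.log n⌋₊)) →ₗ[ℂ]
        (EuclideanSpace ℂ (Fin n) × EuclideanSpace ℂ (Fin n)),
      Function.Injective S ∧
      ∀ w, C⁻¹ * ‖w‖ ≤ qKP n (S w) ∧ qKP n (S w) ≤ C * ‖w‖ := by
  refine ⟨4, by norm_num, fun n hn => ?_⟩
  have hcard : Fintype.card (Fin ⌊log n⌋₊ → Bool) ≤ Fintype.card (Fin n) := by
    simp only [Fintype.card_fun, Fintype.card_bool, Fintype.card_fin]
    have h1 : (1 : ℝ) ≤ n := by exact_mod_cast (by omega : 1 ≤ n)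
    exact_mod_cast two_pow_floor_log_le h1
  obtain ⟨ι⟩ := Function.Embedding.nonempty_of_card_le hcard
  refine ⟨walshEmbedding ι, (injective_iff_map_eq_zero _).mpr fun w hw => ?_,
    walshEmbedding_bounds ι⟩
  have hq := (walshEmbedding_bounds ι w).1
  rw [hw, qKP_zero] at hq
  exact norm_le_zero_iff.mp (by linarith)
end
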